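/- arXiv:1411.3892 — 2 statements merged into one kernel-verified Lean document; each statement's English description precedes it below -/
import Mathlib

section
/- Let (Σ, μ) be a probability space, f : Σ → Σ a bi-measurable invertible map preserving μ, with μ ergodic, and let τ ∈ L¹(μ) with τ > 0. Let h₁ : Σ → ℝ be measurable and c > 0 be such that 0 ≤ h₁(x) and h₁(x) + c ≤ τ(x) for all x in a measurable set I with μ(I) > 0 (and h₂ := h₁ + c on I). Define for x ∈ I and t ∈ [h₁(x), h₁(x)+c] the return time N(x,t) = τ^{n_I}(x) − t + h₁(f^{n_I(x)}(x)), where n_I(x) = inf{k ≥ 1 : f^k(x) ∈ I} and τ^{n_I}(x) = Σ_{k=0}^{n_I(x)-1} τ(f^k(x)). Then (1/(c·μ(I))) ∫_I ∫_{h₁(x)}^{h₁(x)+c} N(x,t) dt dμ(x) = c/2 + (1/μ(I)) ∫_Σ (τ − c·χ_I) dμ, where χ_I is the indicator function of I. -/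
open MeasureTheory

/-- The first return time to a set `A` under the map `f`:
`n_A(x) = inf {k ≥ 1 : f^k(x) ∈ A}` (with the convention `sInf ∅ = 0`). -/
noncomputable def retTime {X : Type*} (f : X → X) (A : Set X) (x : X) : ℕ :=
  sInf {k : ℕ | 1 ≤ k ∧ f^[k] x ∈ A}

/-!
Integrating in `t`, the inner integral is `c · (τ^{n_I}(x) + h₁(f^{n_I(x)} x) − h₁(x)) − c²/2`.
The floors `f^k {x ∈ I | k < n_I(x)}` of the Kakutani tower over `I` are pairwise disjoint, and
they cover almost everything because, by ergodicity of `f` and of `f⁻¹`, almost every orbit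
meets `I` both in the future and in the past. Pushing each floor down to `I` gives Kac's formula
`∫_I ∑_{k < n_I} g ∘ f^k dμ = ∫ g dμ`. For `g = τ` this is `∫ τ dμ`; for the coboundary
`g = ĥ ∘ f − ĥ` with `ĥ = 1_I · h₁` the sum telescopes to `h₁(f^{n_I(x)} x) − h₁(x)`, so its
integral over `I` vanishes.
-/

open Set Function
open scoped ENNReal

section retTime

variable {X : Type*} {f : X → X} {A : Set X} {x : X}

theorem retTime_eq_zero_iff : retTime f A x = 0 ↔ ∀ n, f^[n + 1] x ∉ A := by
  simp only [retTime, Nat.sInf_eq_zero, Set.eq_empty_iff_forall_notMem, mem_ofPred_eq]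
  constructor
  · rintro (⟨h, -⟩ | h) n hn
    · omega
    · exact h (n + 1) ⟨by omega, hn⟩
  · rintro h
    right
    rintro (_ | k) ⟨hk, hkA⟩
    · omega
    · exact h k hkA

theorem retTime_pos (h : ∃ n, f^[n + 1] x ∈ A) : 0 < retTime f A x := by
  obtain ⟨n, hn⟩ := h
  exact Nat.pos_of_ne_zero fun h0 => retTime_eq_zero_iff.1 h0 n hn

theorem iterate_retTime_mem (hx : x ∈ A) : f^[retTime f A x] x ∈ A := by
  rcases Nat.eq_zero_or_pos (retTime f A x) with h | h
  · rwa [h]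
  · exact (Nat.sInf_mem (Nat.nonempty_of_pos_sInf h)).2

theorem iterate_notMem_of_lt_retTime {k : ℕ} (hk : 1 ≤ k) (hkr : k < retTime f A x) :
    f^[k] x ∉ A :=
  fun h => Nat.notMem_of_lt_sInf hkr ⟨hk, h⟩

theorem retTime_eq_iff {n : ℕ} (hn : 1 ≤ n) :
    retTime f A x = n ↔ f^[n] x ∈ A ∧ ∀ k, 1 ≤ k → k < n → f^[k] x ∉ A := by
  constructor
  · rintro rfl
    exact ⟨(Nat.sInf_mem (Nat.nonempty_of_pos_sInf hn)).2,
      fun k hk hkr => iterate_notMem_of_lt_retTime hk hkr⟩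
  · rintro ⟨hnA, hmin⟩
    have hmem := Nat.sInf_mem (⟨n, hn, hnA⟩ : {k | 1 ≤ k ∧ f^[k] x ∈ A}.Nonempty)
    exact (Nat.sInf_le (show n ∈ {k | 1 ≤ k ∧ f^[k] x ∈ A} from ⟨hn, hnA⟩)).antisymm
      (not_lt.1 fun hlt => hmin _ hmem.1 hlt hmem.2)

theorem measurable_retTime [MeasurableSpace X] (hf : Measurable f) (hA : MeasurableSet A) :
    Measurable (retTime f A) := by
  refine measurable_to_countable' fun n => ?_
  rcases Nat.eq_zero_or_pos n with rfl | hn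
  · have : retTime f A ⁻¹' {0} = ⋂ k : ℕ, f^[k + 1] ⁻¹' Aᶜ := by
      ext x
      simp [retTime_eq_zero_iff]
    rw [this]
    exact .iInter fun k => hf.iterate (k + 1) hA.compl
  · have : retTime f A ⁻¹' {n} =
        f^[n] ⁻¹' A ∩ ⋂ k, ⋂ (_ : 1 ≤ k), ⋂ (_ : k < n), f^[k] ⁻¹' Aᶜ := by
      ext x
      simp [retTime_eq_iff hn]
    rw [this]
    exact (hf.iterate n hA).inter <| .iInter fun k => .iInter fun _ => .iInter fun _ =>
      hf.iterate k hA.compl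

theorem measurableSet_sep_lt_retTime [MeasurableSpace X] (hf : Measurable f)
    (hA : MeasurableSet A) (k : ℕ) : MeasurableSet {x ∈ A | k < retTime f A x} :=
  hA.inter (measurableSet_lt measurable_const (measurable_retTime hf hA))

theorem hasSum_indicator_iterate_lt_retTime {M : Type*} [AddCommMonoid M] [TopologicalSpace M]
    (g : X → M) (x : X) :
    HasSum (fun k => {y ∈ A | k < retTime f A y}.indicator (fun y => g (f^[k] y)) x)
      (A.indicator (fun y => ∑ k ∈ Finset.range (retTime f A y), g (f^[k] y)) x) := by
  by_cases hx : x ∈ A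
  · rw [indicator_of_mem hx]
    have hvanish : ∀ k ∉ Finset.range (retTime f A x),
        {y ∈ A | k < retTime f A y}.indicator (fun y => g (f^[k] y)) x = 0 :=
      fun k hk => indicator_of_notMem (fun h => hk (Finset.mem_range.2 h.2)) _
    rw [← Finset.sum_congr rfl fun k hk => indicator_of_mem
      (show x ∈ {y ∈ A | k < retTime f A y} from ⟨hx, Finset.mem_range.1 hk⟩)
      (fun y => g (f^[k] y))]
    exact hasSum_sum_of_ne_finset_zero hvanish
  · rw [indicator_of_notMem hx]
    convert hasSum_zero with k
    exact indicator_of_notMem (fun h => hx h.1) _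

theorem eqOn_comp_iterate_retTime {M : Type*} [AddCommGroup M] (h : X → M) :
    EqOn (fun x => h (f^[retTime f A x] x))
      (fun x => h x + ∑ k ∈ Finset.range (retTime f A x),
        (A.indicator h (f (f^[k] x)) - A.indicator h (f^[k] x))) A := by
  intro x hx
  simp only [← iterate_succ_apply' f]
  rw [Finset.sum_range_sub (fun k => A.indicator h (f^[k] x)), iterate_zero_apply,
    indicator_of_mem (iterate_retTime_mem hx), indicator_of_mem hx, add_sub_cancel]

end retTime

theorem MeasurableEmbedding.iterate {X : Type*} [MeasurableSpace X] {f : X → X}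
    (hf : MeasurableEmbedding f) : ∀ k, MeasurableEmbedding f^[k]
  | 0 => .id
  | k + 1 => (hf.iterate k).comp hf

theorem Ergodic.ae_exists_iterate_mem {X : Type*} [MeasurableSpace X] {μ : Measure X}
    [IsFiniteMeasure μ] {f : X → X} {s : Set X} (hf : Ergodic f μ) (hs : MeasurableSet s)
    (hμs : μ s ≠ 0) : ∀ᵐ x ∂μ, ∃ n, f^[n + 1] x ∈ s := by
  set J := ⋃ n, f^[n + 1] ⁻¹' s
  have hJ : MeasurableSet J := .iUnion fun n => hf.measurable.iterate (n + 1) hs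
  have hfJ : f ⁻¹' J ⊆ J := by
    simp only [J, preimage_iUnion, ← preimage_comp, ← iterate_succ]
    exact iUnion_subset fun n => subset_iUnion (fun n => f^[n + 1] ⁻¹' s) (n + 1)
  rcases hf.ae_empty_or_univ_of_preimage_ae_le' hJ.nullMeasurableSet hfJ.eventuallyLE
    (measure_ne_top μ J) with hJ0 | hJuniv
  · refine absurd (measure_mono_null (subset_iUnion _ 0) (ae_eq_empty.1 hJ0)) ?_
    rwa [iterate_one, hf.measure_preimage hs.nullMeasurableSet]
  · filter_upwards [hJuniv] with x hx
    have hxJ : x ∈ J := hx.mpr (mem_univ x)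
    simpa [J] using hxJ

section Tower

variable {X : Type*}

def towerFloor (f : X → X) (A : Set X) (k : ℕ) : Set X :=
  f^[k] '' {x ∈ A | k < retTime f A x}

theorem pairwise_disjoint_towerFloor {f : X → X} (hf : Injective f) (A : Set X) :
    Pairwise (Disjoint on towerFloor f A) := by
  intro k m hkm
  wlog hlt : k < m generalizing k m
  · exact (this hkm.symm (lt_of_le_of_ne (not_lt.1 hlt) hkm.symm)).symm
  rw [onFun, Set.disjoint_left]
  rintro _ ⟨x, ⟨hxA, -⟩, rfl⟩ ⟨y, ⟨-, hmy⟩, hxy⟩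
  have hyx : f^[m - k] y = x := by
    apply hf.iterate k
    rwa [← iterate_add_apply, Nat.add_sub_cancel' hlt.le]
  exact iterate_notMem_of_lt_retTime (by omega) (by omega) (hyx ▸ hxA)

theorem mem_iUnion_towerFloor {f g : X → X} {A : Set X} {y : X} (hfg : LeftInverse f g)
    (hback : ∃ j, g^[j] y ∈ A) (hfwd : ∃ n, f^[n + 1] y ∈ A) : y ∈ ⋃ k, towerFloor f A k := by
  classical
  set j := Nat.find hback
  have hf_iterate : ∀ i ≤ j, f^[i] (g^[j] y) = g^[j - i] y := fun i hi => by
    conv_lhs => rw [← Nat.add_sub_cancel' hi, iterate_add_apply]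
    exact hfg.iterate i _
  have hx : g^[j] y ∈ A := Nat.find_spec hback
  refine mem_iUnion.2 ⟨j, g^[j] y, ⟨hx, ?_⟩, by simpa using hf_iterate j le_rfl⟩
  have hret : ∃ n, f^[n + 1] (g^[j] y) ∈ A := by
    obtain ⟨n, hn⟩ := hfwd
    refine ⟨n + j, ?_⟩
    rwa [add_right_comm, iterate_add_apply, hf_iterate j le_rfl, Nat.sub_self, iterate_zero_apply]
  by_contra! hle
  have := iterate_retTime_mem (f := f) hx
  rw [hf_iterate _ hle] at this
  exact Nat.find_min hback (Nat.sub_lt (retTime_pos hret |>.trans_le hle) (retTime_pos hret)) this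

end Tower

section Kac

variable {X : Type*} [MeasurableSpace X] {μ : Measure X} {e : X ≃ᵐ X} {I : Set X}
  {E : Type*} [NormedAddCommGroup E]

theorem measurableSet_towerFloor (hI : MeasurableSet I) (k : ℕ) :
    MeasurableSet (towerFloor e I k) :=
  (e.measurableEmbedding.iterate k).measurableSet_image.2
    (measurableSet_sep_lt_retTime e.measurable hI k)

theorem Ergodic.ae_mem_iUnion_towerFloor [IsFiniteMeasure μ] (he : Ergodic e μ)
    (hI : MeasurableSet I) (hμI : μ I ≠ 0) : ∀ᵐ y ∂μ, y ∈ ⋃ k, towerFloor e I k := by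
  filter_upwards [he.ae_exists_iterate_mem hI hμI, he.symm.ae_exists_iterate_mem hI hμI]
    with y hfwd ⟨j, hj⟩
  exact mem_iUnion_towerFloor e.apply_symm_apply ⟨j + 1, hj⟩ hfwd

theorem tsum_setLIntegral_comp_iterate (hmp : MeasurePreserving e μ μ) (hI : MeasurableSet I)
    (hcover : ∀ᵐ y ∂μ, y ∈ ⋃ k, towerFloor e I k) (G : X → ℝ≥0∞) :
    ∑' k, ∫⁻ x in {x ∈ I | k < retTime e I x}, G (e^[k] x) ∂μ = ∫⁻ x, G x ∂μ := by
  calc _ = ∑' k, ∫⁻ x in towerFloor e I k, G x ∂μ := tsum_congr fun k =>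
        (hmp.iterate k).setLIntegral_comp_emb (e.measurableEmbedding.iterate k) G _
    _ = ∫⁻ x in ⋃ k, towerFloor e I k, G x ∂μ :=
        (lintegral_iUnion (measurableSet_towerFloor hI)
          (pairwise_disjoint_towerFloor e.injective I) G).symm
    _ = ∫⁻ x, G x ∂μ := by
        rw [Measure.restrict_congr_set ((Filter.eventuallyEq_univ (s := ⋃ k, _)).2 hcover),
          Measure.restrict_univ]

theorem tsum_setIntegral_comp_iterate (hmp : MeasurePreserving e μ μ) (hI : MeasurableSet I)
    (hcover : ∀ᵐ y ∂μ, y ∈ ⋃ k, towerFloor e I k) [NormedSpace ℝ E] {g : X → E}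
    (hg : Integrable g μ) :
    ∑' k, ∫ x in {x ∈ I | k < retTime e I x}, g (e^[k] x) ∂μ = ∫ x, g x ∂μ := by
  calc _ = ∑' k, ∫ x in towerFloor e I k, g x ∂μ := tsum_congr fun k =>
        ((hmp.iterate k).setIntegral_image_emb (e.measurableEmbedding.iterate k) g _).symm
    _ = ∫ x in ⋃ k, towerFloor e I k, g x ∂μ :=
        (integral_iUnion (measurableSet_towerFloor hI)
          (pairwise_disjoint_towerFloor e.injective I) hg.integrableOn).symm
    _ = ∫ x, g x ∂μ := by
        rw [Measure.restrict_congr_set ((Filter.eventuallyEq_univ (s := ⋃ k, _)).2 hcover),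
          Measure.restrict_univ]

theorem setLIntegral_sum_retTime (hmp : MeasurePreserving e μ μ) (hI : MeasurableSet I)
    (hcover : ∀ᵐ y ∂μ, y ∈ ⋃ k, towerFloor e I k) {G : X → ℝ≥0∞} (hG : AEMeasurable G μ) :
    ∫⁻ x in I, ∑ k ∈ Finset.range (retTime e I x), G (e^[k] x) ∂μ = ∫⁻ x, G x ∂μ := by
  rw [← lintegral_indicator hI]
  simp_rw [← (hasSum_indicator_iterate_lt_retTime G _).tsum_eq]
  refine (lintegral_tsum fun k => ?_).trans ?_
  · exact (hG.comp_quasiMeasurePreserving (hmp.iterate k).quasiMeasurePreserving).indicator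
      (measurableSet_sep_lt_retTime e.measurable hI k)
  simp_rw [lintegral_indicator (measurableSet_sep_lt_retTime e.measurable hI _)]
  exact tsum_setLIntegral_comp_iterate hmp hI hcover G

theorem integrableOn_sum_retTime (hmp : MeasurePreserving e μ μ) (hI : MeasurableSet I)
    (hcover : ∀ᵐ y ∂μ, y ∈ ⋃ k, towerFloor e I k) {g : X → E} (hg : Integrable g μ) :
    IntegrableOn (fun x => ∑ k ∈ Finset.range (retTime e I x), g (e^[k] x)) I μ := by
  refine ⟨(aestronglyMeasurable_indicator_iff hI).1 ?_, ?_⟩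
  · refine aestronglyMeasurable_of_tendsto_ae Filter.atTop (fun n => ?_)
      (ae_of_all _ fun x => (hasSum_indicator_iterate_lt_retTime g x).tendsto_sum_nat)
    exact Finset.aestronglyMeasurable_fun_sum _ fun k _ =>
      (hg.1.comp_measurePreserving (hmp.iterate k)).indicator
        (measurableSet_sep_lt_retTime e.measurable hI k)
  · calc ∫⁻ x in I, ‖∑ k ∈ Finset.range (retTime e I x), g (e^[k] x)‖ₑ ∂μ
        ≤ ∫⁻ x in I, ∑ k ∈ Finset.range (retTime e I x), ‖g (e^[k] x)‖ₑ ∂μ :=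
          lintegral_mono fun x => enorm_sum_le _ _
      _ = ∫⁻ x, ‖g x‖ₑ ∂μ := setLIntegral_sum_retTime hmp hI hcover hg.1.enorm
      _ < ∞ := hg.2

theorem setIntegral_sum_retTime (hmp : MeasurePreserving e μ μ) (hI : MeasurableSet I)
    (hcover : ∀ᵐ y ∂μ, y ∈ ⋃ k, towerFloor e I k) [NormedSpace ℝ E] {g : X → E}
    (hg : Integrable g μ) :
    ∫ x in I, ∑ k ∈ Finset.range (retTime e I x), g (e^[k] x) ∂μ = ∫ x, g x ∂μ := by
  rw [← integral_indicator hI]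
  simp_rw [← (hasSum_indicator_iterate_lt_retTime g _).tsum_eq]
  refine (integral_tsum (fun k => ?_) ?_).trans ?_
  · exact (hg.1.comp_measurePreserving (hmp.iterate k)).indicator
      (measurableSet_sep_lt_retTime e.measurable hI k)
  · simp_rw [enorm_indicator_eq_indicator_enorm,
      lintegral_indicator (measurableSet_sep_lt_retTime e.measurable hI _)]
    exact (tsum_setLIntegral_comp_iterate hmp hI hcover (‖g ·‖ₑ)).trans_ne hg.2.ne
  · simp_rw [integral_indicator (measurableSet_sep_lt_retTime e.measurable hI _)]
    exact tsum_setIntegral_comp_iterate hmp hI hcover hg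

end Kac

section InducedMap

variable {X : Type*} [MeasurableSpace X] {μ : Measure X} {e : X ≃ᵐ X} {I : Set X}
  {E : Type*} [NormedAddCommGroup E] {h : X → E}

theorem integrable_indicator_comp_sub (hmp : MeasurePreserving e μ μ) (hI : MeasurableSet I)
    (hh : IntegrableOn h I μ) :
    Integrable (fun y => I.indicator h (e y) - I.indicator h y) μ :=
  ((hmp.integrable_comp_emb e.measurableEmbedding).2 (hh.integrable_indicator hI)).sub
    (hh.integrable_indicator hI)

theorem integrableOn_comp_iterate_retTime (hmp : MeasurePreserving e μ μ) (hI : MeasurableSet I)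
    (hcover : ∀ᵐ y ∂μ, y ∈ ⋃ k, towerFloor e I k) (hh : IntegrableOn h I μ) :
    IntegrableOn (fun x => h (e^[retTime e I x] x)) I μ :=
  (hh.add (integrableOn_sum_retTime hmp hI hcover
    (integrable_indicator_comp_sub hmp hI hh))).congr_fun
    (eqOn_comp_iterate_retTime h).symm hI

theorem setIntegral_comp_iterate_retTime (hmp : MeasurePreserving e μ μ) (hI : MeasurableSet I)
    (hcover : ∀ᵐ y ∂μ, y ∈ ⋃ k, towerFloor e I k) [NormedSpace ℝ E] (hh : IntegrableOn h I μ) :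
    ∫ x in I, h (e^[retTime e I x] x) ∂μ = ∫ x in I, h x ∂μ := by
  have hD := integrable_indicator_comp_sub hmp hI hh
  have hĥ := hh.integrable_indicator hI
  have hĥe : Integrable (fun y => I.indicator h (e y)) μ :=
    (hmp.integrable_comp_emb e.measurableEmbedding).2 hĥ
  rw [setIntegral_congr_fun hI (eqOn_comp_iterate_retTime h),
    integral_add hh (integrableOn_sum_retTime hmp hI hcover hD),
    setIntegral_sum_retTime hmp hI hcover hD,
    integral_sub hĥe hĥ,
    hmp.integral_comp' (I.indicator h), sub_self, add_zero]

end InducedMap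

theorem intervalIntegral_const_sub_id (a b c : ℝ) :
    ∫ t in a..a + c, (b - t) = c * (b - a) - c ^ 2 / 2 := by
  rw [intervalIntegral.integral_sub intervalIntegrable_const intervalIntegral.intervalIntegrable_id,
    intervalIntegral.integral_const, integral_id, smul_eq_mul]
  ring

theorem kac_suspension_almost_cylinder_general {X : Type*} [MeasurableSpace X] [Nonempty X]
    (μ : Measure X) [IsProbabilityMeasure μ] (f : X → X) (herg : Ergodic f μ)
    (hbij : Function.Bijective f) (hinv : Measurable (Function.invFun f))
    (τ : X → ℝ) (hτint : Integrable τ μ)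
    (h₁ : X → ℝ) (hh₁ : Measurable h₁) (c : ℝ) (hc : 0 < c)
    (I : Set X) (hI : MeasurableSet I) (hIpos : 0 < μ I)
    (hord : ∀ x ∈ I, 0 ≤ h₁ x ∧ h₁ x + c ≤ τ x) :
    (1 / (c * (μ I).toReal)) *
        (∫ x in I, (∫ t in h₁ x..(h₁ x + c),
          ((∑ k ∈ Finset.range (retTime f I x), τ (f^[k] x)) - t
            + h₁ (f^[retTime f I x] x))) ∂μ)
      = c / 2 + (1 / (μ I).toReal) * ∫ x, (τ x - c * I.indicator 1 x) ∂μ := by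
  obtain ⟨e, rfl⟩ : ∃ e : X ≃ᵐ X, ⇑e = f :=
    ⟨⟨⟨f, invFun f, leftInverse_invFun hbij.1, rightInverse_invFun hbij.2⟩, herg.measurable,
      hinv⟩, rfl⟩
  have hmp := herg.toMeasurePreserving
  have hcover := herg.ae_mem_iUnion_towerFloor hI hIpos.ne'
  have hh₁I : IntegrableOn h₁ I μ := hτint.integrableOn.mono' hh₁.aestronglyMeasurable <|
    (ae_restrict_iff' hI).2 <| ae_of_all _ fun x hx => by
      rw [Real.norm_of_nonneg (hord x hx).1]
      linarith [hord x hx]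
  have hS := integrableOn_sum_retTime hmp hI hcover hτint
  have hH := integrableOn_comp_iterate_retTime hmp hI hcover hh₁I
  have hμI : (μ I).toReal ≠ 0 := (ENNReal.toReal_pos hIpos.ne' (measure_ne_top μ I)).ne'
  have hSH : IntegrableOn (fun x => (∑ k ∈ Finset.range (retTime e I x), τ (e^[k] x))
      + h₁ (e^[retTime e I x] x)) I μ := hS.add hH
  have hw : IntegrableOn (fun x => (∑ k ∈ Finset.range (retTime e I x), τ (e^[k] x))
      + h₁ (e^[retTime e I x] x) - h₁ x) I μ := hSH.sub hh₁I
  have hχ : Integrable (fun x => c * I.indicator 1 x) μ :=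
    ((integrable_const (1 : ℝ)).indicator hI).const_mul c
  simp_rw [sub_add_eq_add_sub, intervalIntegral_const_sub_id]
  rw [integral_sub (hw.const_mul c) (integrableOn_const (measure_ne_top μ I)),
    integral_const_mul, integral_sub hSH hh₁I, integral_add hS hH,
    setIntegral_sum_retTime hmp hI hcover hτint,
    setIntegral_comp_iterate_retTime hmp hI hcover hh₁I,
    setIntegral_const, integral_sub hτint hχ,
    integral_const_mul, integral_indicator_one hI, measureReal_def, smul_eq_mul]
  field_simp
  ring

/-- The 'almost cylinder' case of the Kac-type formula for suspension flows: for the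
set `A = {(x,t) : x ∈ I, h₁(x) ≤ t ≤ h₁(x)+c}` with parallel sides of width `c`, the
mean of the return time `N(x,t) = τ^{n_I}(x) - t + h₁(f^{n_I(x)}(x))` with respect to
the normalized measure `(1/(c·μ(I)))·dμ dt` on `A` equals
`c/2 + (1/μ(I)) ∫ (τ - c·χ_I) dμ`. -/
theorem kac_suspension_almost_cylinder {X : Type*} [MeasurableSpace X] [Nonempty X]
    (μ : Measure X) [IsProbabilityMeasure μ] (f : X → X) (herg : Ergodic f μ)
    (hbij : Function.Bijective f) (hinv : Measurable (Function.invFun f))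
    (τ : X → ℝ) (hτint : Integrable τ μ) (hτpos : ∀ x, 0 < τ x)
    (h₁ : X → ℝ) (hh₁ : Measurable h₁) (c : ℝ) (hc : 0 < c)
    (I : Set X) (hI : MeasurableSet I) (hIpos : 0 < μ I)
    (hord : ∀ x ∈ I, 0 ≤ h₁ x ∧ h₁ x + c ≤ τ x) :
    (1 / (c * (μ I).toReal)) *
        (∫ x in I, (∫ t in h₁ x..(h₁ x + c),
          ((∑ k ∈ Finset.range (retTime f I x), τ (f^[k] x)) - t
            + h₁ (f^[retTime f I x] x))) ∂μ)
      = c / 2 + (1 / (μ I).toReal) * ∫ x, (τ x - c * I.indicator 1 x) ∂μ :=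
  kac_suspension_almost_cylinder_general μ f herg hbij hinv τ hτint h₁ hh₁ c hc I hI hIpos hord
end

section
/- Let (Σ, μ) be a probability space, f : Σ → Σ a measurable (not necessarily invertible) map preserving μ, with μ ergodic, and let τ ∈ L¹(μ) with τ ≥ 0. For any measurable set I ⊆ Σ with μ(I) > 0, letting n_I(x) = inf{k ≥ 1 : f^k(x) ∈ I} and τ^{n_I}(x) = Σ_{k=0}^{n_I(x)-1} τ(f^k(x)), one has ∫_Σ τ dμ = ∫_I τ^{n_I}(x) dμ(x). -/
open MeasureTheory

/-! Let `G_k` be the set of points that do not visit `I` at the times `1, …, k`. Then `G_0 = X`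
and `G_{k+1} = f⁻¹(G_k \ I)`, so invariance of `μ` gives
`∫_{G_k} τ ∘ f^k = ∫_{G_k ∩ I} τ ∘ f^k + ∫_{G_{k+1}} τ ∘ f^{k+1}`, and telescoping
`∫ τ = ∑_{k<N} ∫_{G_k ∩ I} τ ∘ f^k + ∫_{G_N} τ ∘ f^N`. By ergodicity almost every point visits
`I`, so `μ(G_N) → 0`; as the `τ ∘ f^N` are identically distributed, hence uniformly integrable,
the remainder tends to `0`. Finally `x ∈ G_k ↔ k < n_I(x)`, so the series is `∫_I τ^{n_I}`. -/

open Filter Set Function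
open scoped ENNReal Topology

section ReturnTime

variable {X : Type*} (f : X → X) (I : Set X)

/-- This is `{k < n_I}`, except at the points that never return, where `retTime` is `0`. -/
def noReturnUpTo (k : ℕ) : Set X :=
  ⋂ j ∈ Finset.range k, f^[j + 1] ⁻¹' Iᶜ

variable {f I}

theorem mem_noReturnUpTo {x : X} {k : ℕ} :
    x ∈ noReturnUpTo f I k ↔ ∀ j < k, f^[j + 1] x ∉ I := by
  simp [noReturnUpTo]

@[simp]
theorem noReturnUpTo_zero : noReturnUpTo f I 0 = univ := by
  simp [noReturnUpTo]

theorem noReturnUpTo_succ (k : ℕ) :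
    noReturnUpTo f I (k + 1) = f ⁻¹' (noReturnUpTo f I k \ I) := by
  ext x
  rw [mem_noReturnUpTo, Nat.forall_lt_succ_left, mem_preimage, Set.mem_sdiff, mem_noReturnUpTo,
    and_comm]
  simp only [zero_add, iterate_one, ← iterate_succ_apply]

theorem antitone_noReturnUpTo : Antitone (noReturnUpTo f I) :=
  fun _ _ hmn _ hx => mem_noReturnUpTo.2 fun j hj => mem_noReturnUpTo.1 hx j (hj.trans_le hmn)

theorem measurableSet_noReturnUpTo [MeasurableSpace X] (hf : Measurable f) (hI : MeasurableSet I)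
    (k : ℕ) : MeasurableSet (noReturnUpTo f I k) :=
  Finset.measurableSet_biInter _ fun j _ => hf.iterate (j + 1) hI.compl

theorem mem_noReturnUpTo_iff_lt_retTime {x : X} (hx : ∃ k, 1 ≤ k ∧ f^[k] x ∈ I) {k : ℕ} :
    x ∈ noReturnUpTo f I k ↔ k < retTime f I x := by
  rw [mem_noReturnUpTo]
  constructor
  · intro h
    by_contra! hle
    obtain ⟨h1, hmem⟩ : 1 ≤ retTime f I x ∧ f^[retTime f I x] x ∈ I := Nat.sInf_mem hx
    exact h (retTime f I x - 1) (by omega) (by rwa [Nat.sub_add_cancel h1])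
  · intro hk j hj hmem
    have : retTime f I x ≤ j + 1 := Nat.sInf_le ⟨j.succ_pos, hmem⟩
    omega

theorem tsum_indicator_noReturnUpTo_eq_sum_range_retTime {M : Type*} [AddCommMonoid M]
    [TopologicalSpace M] {φ : ℕ → X → M} {x : X} (hx : ∃ k, 1 ≤ k ∧ f^[k] x ∈ I) :
    ∑' k, (noReturnUpTo f I k).indicator (φ k) x = ∑ k ∈ Finset.range (retTime f I x), φ k x := by
  rw [tsum_eq_sum (s := Finset.range (retTime f I x))]
  · refine Finset.sum_congr rfl fun k hk => indicator_of_mem ?_ _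
    exact (mem_noReturnUpTo_iff_lt_retTime hx).2 (Finset.mem_range.1 hk)
  · refine fun k hk => indicator_of_notMem (fun h => hk ?_) _
    exact Finset.mem_range.2 ((mem_noReturnUpTo_iff_lt_retTime hx).1 h)

end ReturnTime

section UniformIntegrability

variable {X Y : Type*} [MeasurableSpace X] [MeasurableSpace Y] {μ : Measure X} {ν : Measure Y}

namespace MeasureTheory.MeasurePreserving

theorem lintegral_comp_of_aemeasurable {φ : X → Y} (hφ : MeasurePreserving φ μ ν)
    {g : Y → ℝ≥0∞} (hg : AEMeasurable g ν) : ∫⁻ x, g (φ x) ∂μ = ∫⁻ y, g y ∂ν := by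
  rw [← hφ.map_eq] at hg ⊢
  exact (lintegral_map' hg hφ.measurable.aemeasurable).symm

theorem setLIntegral_comp_le {φ : X → Y} (hφ : MeasurePreserving φ μ ν)
    {g : Y → ℝ≥0∞} (hg : AEMeasurable g ν) (s : Set X) (M : ℝ≥0∞) :
    ∫⁻ x in s, g (φ x) ∂μ ≤ M * μ s + ∫⁻ y, g y - M ∂ν :=
  calc ∫⁻ x in s, g (φ x) ∂μ ≤ ∫⁻ x in s, M + (g (φ x) - M) ∂μ :=
        lintegral_mono fun _ => le_add_tsub
    _ = M * μ s + ∫⁻ x in s, g (φ x) - M ∂μ := by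
        rw [lintegral_add_left measurable_const, setLIntegral_const]
    _ ≤ M * μ s + ∫⁻ x, g (φ x) - M ∂μ := by gcongr; exact Measure.restrict_le_self
    _ = M * μ s + ∫⁻ y, g y - M ∂ν := by
        rw [hφ.lintegral_comp_of_aemeasurable (g := fun y => g y - M) (hg.sub aemeasurable_const)]

end MeasureTheory.MeasurePreserving

theorem tendsto_lintegral_tsub_natCast_atTop {g : X → ℝ≥0∞} (hg : AEMeasurable g μ)
    (hfin : ∫⁻ x, g x ∂μ ≠ ∞) : Tendsto (fun M : ℕ => ∫⁻ x, g x - M ∂μ) atTop (𝓝 0) := by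
  have hlim : ∀ᵐ x ∂μ, Tendsto (fun M : ℕ => g x - M) atTop (𝓝 0) := by
    filter_upwards [ae_lt_top' hg hfin] with x hx
    obtain ⟨M₀, hM₀⟩ := ENNReal.exists_nat_gt hx.ne
    refine tendsto_const_nhds.congr' ?_
    filter_upwards [eventually_ge_atTop M₀] with M hM
    exact (tsub_eq_zero_of_le (hM₀.le.trans (by exact_mod_cast hM))).symm
  simpa using tendsto_lintegral_of_dominated_convergence' g
    (fun M => hg.sub aemeasurable_const) (fun M => ae_of_all _ fun x => tsub_le_self) hfin hlim

theorem tendsto_setLIntegral_comp_of_measurePreserving {ι : Type*} {l : Filter ι}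
    {φ : ι → X → Y} (hφ : ∀ i, MeasurePreserving (φ i) μ ν) {g : Y → ℝ≥0∞}
    (hg : AEMeasurable g ν) (hfin : ∫⁻ y, g y ∂ν ≠ ∞) {s : ι → Set X}
    (hs : Tendsto (fun i => μ (s i)) l (𝓝 0)) :
    Tendsto (fun i => ∫⁻ x in s i, g (φ i x) ∂μ) l (𝓝 0) := by
  rw [ENNReal.tendsto_nhds_zero]
  intro ε hε
  obtain ⟨M, hM⟩ : ∃ M : ℕ, ∫⁻ y, g y - M ∂ν ≤ ε / 2 :=
    (ENNReal.tendsto_nhds_zero.mp (tendsto_lintegral_tsub_natCast_atTop hg hfin) _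
      (ENNReal.half_pos hε.ne')).exists
  have hMs : Tendsto (fun i => (M : ℝ≥0∞) * μ (s i)) l (𝓝 0) := by
    simpa using ENNReal.Tendsto.const_mul hs (Or.inr (ENNReal.natCast_ne_top M))
  filter_upwards [ENNReal.tendsto_nhds_zero.mp hMs _ (ENNReal.half_pos hε.ne')] with i hi
  calc ∫⁻ x in s i, g (φ i x) ∂μ ≤ M * μ (s i) + ∫⁻ y, g y - M ∂ν :=
        (hφ i).setLIntegral_comp_le hg (s i) M
    _ ≤ ε / 2 + ε / 2 := add_le_add hi hM
    _ = ε := ENNReal.add_halves ε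

end UniformIntegrability

section Return

variable {X : Type*} [MeasurableSpace X] {μ : Measure X} {f : X → X} {I : Set X} {g : X → ℝ≥0∞}

theorem Ergodic.ae_exists_iterate_mem_s13 [IsFiniteMeasure μ] (hf : Ergodic f μ)
    (hI : MeasurableSet I) (hI0 : μ I ≠ 0) : ∀ᵐ x ∂μ, ∃ k, 1 ≤ k ∧ f^[k] x ∈ I := by
  set A := ⋃ k, f^[k] ⁻¹' I
  have hA : MeasurableSet A := MeasurableSet.iUnion fun k => hf.measurable.iterate k hI
  have hfA : f ⁻¹' A ⊆ A := by
    simp only [A, preimage_iUnion, ← preimage_comp, ← iterate_succ]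
    exact iUnion_subset fun k => subset_iUnion (fun k => f^[k] ⁻¹' I) (k + 1)
  have hAuniv : A =ᵐ[μ] univ :=
    (hf.ae_empty_or_univ_of_preimage_ae_le hA.nullMeasurableSet hfA.eventuallyLE).resolve_left
      fun h => hI0 (measure_mono_null (subset_iUnion_of_subset 0 subset_rfl) (ae_eq_empty.1 h))
  filter_upwards [hf.quasiMeasurePreserving.ae (mem_ae_iff.2 (ae_eq_univ.1 hAuniv))] with x hx
  obtain ⟨k, hk⟩ := mem_iUnion.1 hx
  exact ⟨k + 1, k.succ_pos, by rwa [iterate_succ_apply]⟩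

theorem Ergodic.tendsto_measure_noReturnUpTo [IsFiniteMeasure μ] (hf : Ergodic f μ)
    (hI : MeasurableSet I) (hI0 : μ I ≠ 0) :
    Tendsto (fun k => μ (noReturnUpTo f I k)) atTop (𝓝 0) := by
  have hnull : μ (⋂ k, noReturnUpTo f I k) = 0 := by
    refine measure_mono_null (fun x hx => ?_) (ae_iff.1 (hf.ae_exists_iterate_mem_s13 hI hI0))
    exact fun hret => lt_irrefl _ ((mem_noReturnUpTo_iff_lt_retTime hret).1 (mem_iInter.1 hx _))
  rw [← hnull]
  exact tendsto_measure_iInter_atTop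
    (fun k => (measurableSet_noReturnUpTo hf.measurable hI k).nullMeasurableSet)
    antitone_noReturnUpTo ⟨0, measure_ne_top μ _⟩

theorem MeasureTheory.MeasurePreserving.setLIntegral_noReturnUpTo_eq
    (hf : MeasurePreserving f μ μ) (hI : MeasurableSet I) (hg : AEMeasurable g μ) (k : ℕ) :
    ∫⁻ x in noReturnUpTo f I k, g (f^[k] x) ∂μ =
      ∫⁻ x in noReturnUpTo f I k ∩ I, g (f^[k] x) ∂μ +
        ∫⁻ x in noReturnUpTo f I (k + 1), g (f^[k + 1] x) ∂μ := by
  have hG := measurableSet_noReturnUpTo hf.measurable hI k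
  rw [← lintegral_inter_add_sdiff _ _ hI, noReturnUpTo_succ]
  simp only [iterate_succ_apply]
  congr 1
  exact ((hf.restrict_preimage (hG.diff hI)).lintegral_comp_of_aemeasurable
    (hg.comp_quasiMeasurePreserving (hf.iterate k).quasiMeasurePreserving).restrict).symm

theorem MeasureTheory.MeasurePreserving.lintegral_eq_sum_add_setLIntegral_noReturnUpTo
    (hf : MeasurePreserving f μ μ) (hI : MeasurableSet I) (hg : AEMeasurable g μ) (N : ℕ) :
    ∫⁻ x, g x ∂μ = ∑ k ∈ Finset.range N, ∫⁻ x in noReturnUpTo f I k ∩ I, g (f^[k] x) ∂μ +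
      ∫⁻ x in noReturnUpTo f I N, g (f^[N] x) ∂μ := by
  induction N with
  | zero => simp
  | succ N ih =>
    rw [ih, hf.setLIntegral_noReturnUpTo_eq hI hg N, Finset.sum_range_succ, add_assoc]

theorem Ergodic.lintegral_eq_tsum_setLIntegral_noReturnUpTo [IsFiniteMeasure μ]
    (hf : Ergodic f μ) (hI : MeasurableSet I) (hI0 : μ I ≠ 0) (hg : AEMeasurable g μ)
    (hfin : ∫⁻ x, g x ∂μ ≠ ∞) :
    ∫⁻ x, g x ∂μ = ∑' k, ∫⁻ x in noReturnUpTo f I k ∩ I, g (f^[k] x) ∂μ := by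
  have hrem : Tendsto (fun N => ∫⁻ x in noReturnUpTo f I N, g (f^[N] x) ∂μ) atTop (𝓝 0) :=
    tendsto_setLIntegral_comp_of_measurePreserving (fun N => hf.toMeasurePreserving.iterate N)
      hg hfin (hf.tendsto_measure_noReturnUpTo hI hI0)
  have hlim := (ENNReal.tendsto_nat_tsum fun k =>
    ∫⁻ x in noReturnUpTo f I k ∩ I, g (f^[k] x) ∂μ).add hrem
  rw [add_zero] at hlim
  exact tendsto_nhds_unique (tendsto_const_nhds.congr
    (hf.toMeasurePreserving.lintegral_eq_sum_add_setLIntegral_noReturnUpTo hI hg)) hlim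

theorem Ergodic.aemeasurable_sum_range_retTime [IsFiniteMeasure μ] (hf : Ergodic f μ)
    (hI : MeasurableSet I) (hI0 : μ I ≠ 0) (hg : AEMeasurable g μ) :
    AEMeasurable (fun x => ∑ k ∈ Finset.range (retTime f I x), g (f^[k] x)) μ := by
  have htsum : AEMeasurable
      (fun x => ∑' k, (noReturnUpTo f I k).indicator (fun y => g (f^[k] y)) x) μ :=
    AEMeasurable.tsum fun k => AEMeasurable.indicator
      (hg.comp_quasiMeasurePreserving (hf.toMeasurePreserving.iterate k).quasiMeasurePreserving)
      (measurableSet_noReturnUpTo hf.measurable hI k)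
  refine htsum.congr ?_
  filter_upwards [hf.ae_exists_iterate_mem_s13 hI hI0] with x hx
    using tsum_indicator_noReturnUpTo_eq_sum_range_retTime hx

theorem Ergodic.lintegral_eq_setLIntegral_sum_range_retTime [IsFiniteMeasure μ]
    (hf : Ergodic f μ) (hI : MeasurableSet I) (hI0 : μ I ≠ 0) (hg : AEMeasurable g μ)
    (hfin : ∫⁻ x, g x ∂μ ≠ ∞) :
    ∫⁻ x, g x ∂μ = ∫⁻ x in I, ∑ k ∈ Finset.range (retTime f I x), g (f^[k] x) ∂μ := by
  have hG := measurableSet_noReturnUpTo hf.measurable hI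
  have hgf : ∀ k, AEMeasurable (fun x => g (f^[k] x)) μ := fun k =>
    hg.comp_quasiMeasurePreserving (hf.toMeasurePreserving.iterate k).quasiMeasurePreserving
  have hrestrict : ∀ k, ∫⁻ x in noReturnUpTo f I k ∩ I, g (f^[k] x) ∂μ =
      ∫⁻ x in I, (noReturnUpTo f I k).indicator (fun y => g (f^[k] y)) x ∂μ := fun k => by
    rw [lintegral_indicator (hG k), Measure.restrict_restrict (hG k)]
  rw [hf.lintegral_eq_tsum_setLIntegral_noReturnUpTo hI hI0 hg hfin, tsum_congr hrestrict,
    ← lintegral_tsum fun k => ((hgf k).indicator (hG k)).restrict]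
  refine lintegral_congr_ae (ae_restrict_of_ae ?_)
  filter_upwards [hf.ae_exists_iterate_mem_s13 hI hI0] with x hx
    using tsum_indicator_noReturnUpTo_eq_sum_range_retTime hx

end Return

/-- For an ergodic measure preserving (not necessarily invertible) map `f` on a
probability space `(X, μ)`, a nonnegative integrable roof function `τ` and a
measurable set `I` with `μ(I) > 0`, the Birkhoff sum of `τ` up to the first return
time `n_I` satisfies `∫_X τ dμ = ∫_I τ^{n_I} dμ`. -/
theorem integral_roof_eq_integral_birkhoff_return_noninvertible {X : Type*}
    [MeasurableSpace X] (μ : Measure X) [IsProbabilityMeasure μ]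
    (f : X → X) (herg : Ergodic f μ)
    (τ : X → ℝ) (hτint : Integrable τ μ) (hτnonneg : ∀ x, 0 ≤ τ x)
    (I : Set X) (hI : MeasurableSet I) (hIpos : 0 < μ I) :
    ∫ x, τ x ∂μ = ∫ x in I, (∑ k ∈ Finset.range (retTime f I x), τ (f^[k] x)) ∂μ := by
  have hg : AEMeasurable (fun x => ENNReal.ofReal (τ x)) μ :=
    hτint.aestronglyMeasurable.aemeasurable.ennreal_ofReal
  have hsum_nonneg : ∀ x, 0 ≤ ∑ k ∈ Finset.range (retTime f I x), τ (f^[k] x) :=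
    fun x => Finset.sum_nonneg fun k _ => hτnonneg _
  have hsum : ∀ x, ENNReal.ofReal (∑ k ∈ Finset.range (retTime f I x), τ (f^[k] x)) =
      ∑ k ∈ Finset.range (retTime f I x), ENNReal.ofReal (τ (f^[k] x)) :=
    fun x => ENNReal.ofReal_sum_of_nonneg fun k _ => hτnonneg _
  have hmeas : AEStronglyMeasurable
      (fun x => ∑ k ∈ Finset.range (retTime f I x), τ (f^[k] x)) (μ.restrict I) := by
    refine ((herg.aemeasurable_sum_range_retTime hI hIpos.ne' hg).restrict.ennreal_toReal.congr
      (ae_of_all _ fun x => ?_)).aestronglyMeasurable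
    dsimp only
    rw [← hsum, ENNReal.toReal_ofReal (hsum_nonneg x)]
  rw [integral_eq_lintegral_of_nonneg_ae (ae_of_all _ hτnonneg) hτint.aestronglyMeasurable,
    integral_eq_lintegral_of_nonneg_ae (ae_of_all _ hsum_nonneg) hmeas]
  simp only [hsum]
  rw [herg.lintegral_eq_setLIntegral_sum_range_retTime hI hIpos.ne' hg hτint.lintegral_lt_top.ne]
end
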